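/- arXiv:math/0010297 — 3 statements merged into one kernel-verified Lean document; each statement's English description precedes it below -/
import Mathlib

section
/- Let f : ℝ₋ⁿ → ℝ be an indicator profile and let L = {t ∈ ℝ₋ⁿ : f(t) = −1}. For every compact subset F of L, the set Θ_F coincides with the gradient image of F for the function f₋₁ = max(f, −1); that is, Θ_F = ⋃_{t⁰ ∈ F} { a ∈ ℝⁿ : f₋₁(t) ≥ f₋₁(t⁰) + ⟨a, t − t⁰⟩ for all t ∈ ℝ₋ⁿ }. (This is Proposition 2 of the paper, stated in the logarithmic coordinates in which an indicator weight Φ becomes the convex function f(t) = Φ(e^{t₁},…,e^{tₙ}).) -/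
/-!
Write `g = max(f, −1)`. A vector `a ≥ 0` with `sup_L ⟨a,·⟩ = −1` satisfies `⟨a,·⟩ ≤ f` on `ℝ₋ⁿ`,
because every point of `ℝ₋ⁿ` with `f < 0` is a positive multiple of a point of `L`. Taking
`t⁰ ∈ F` with `⟨a,t⁰⟩ = −1` (it exists because `F` is compact), the affine function
`−1 + λ⟨a, t − t⁰⟩` lies below `−1` where `⟨a,t⟩ ≤ −1` and below `⟨a,t⟩ ≤ f` elsewhere, so `λa`
is a subgradient of `g` at `t⁰`.

Conversely, a subgradient `x` of `g` at `t⁰ ∈ F` is nonnegative since `g` is monotone, satisfies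
`⟨x,t⁰⟩ ≥ −1` by comparison with `t⁰/2`, and `⟨x,·⟩ ≤ ⟨x,t⁰⟩` on `L` since `g = −1` there; so
`x = λb` with `λ = −⟨x,t⁰⟩ ∈ [0,1]` and `b ∈ Γ_F`. When `λ = 0`, i.e. `x = 0`, one still needs
`Γ_F ≠ ∅`: a subgradient of the convex function `f` at `t⁰`, which exists by Hahn–Banach,
lies in `Γ_F` by Euler's identity for homogeneous functions.
-/

open Set

/-- The negative orthant `ℝ₋ⁿ = (−∞,0)ⁿ`. -/
def negOrth (n : ℕ) : Set (Fin n → ℝ) := {t | ∀ i, t i < 0}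

/-- The standard inner product `⟨a, t⟩ = ∑ aᵢ tᵢ` on `ℝⁿ`. -/
def dotp {n : ℕ} (a t : Fin n → ℝ) : ℝ := ∑ i, a i * t i

/-- An indicator profile: convex, nonpositive, nondecreasing in each variable,
and positively homogeneous on the negative orthant. -/
def IsIndicatorProfile {n : ℕ} (f : (Fin n → ℝ) → ℝ) : Prop :=
  ConvexOn ℝ (negOrth n) f ∧
  (∀ t ∈ negOrth n, f t ≤ 0) ∧
  (∀ s ∈ negOrth n, ∀ t ∈ negOrth n, (∀ i, s i ≤ t i) → f s ≤ f t) ∧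
  (∀ c : ℝ, 0 < c → ∀ t ∈ negOrth n, f (c • t) = c * f t)

/-- The level set `L = {t ∈ ℝ₋ⁿ : f(t) = −1}`. -/
def levelL {n : ℕ} (f : (Fin n → ℝ) → ℝ) : Set (Fin n → ℝ) :=
  {t ∈ negOrth n | f t = -1}

/-- `Γ_F = {a ∈ ℝ₊ⁿ : sup_{t∈F} ⟨a,t⟩ = sup_{t∈L} ⟨a,t⟩ = −1}`. -/
def GammaSet {n : ℕ} (f : (Fin n → ℝ) → ℝ) (F : Set (Fin n → ℝ)) :
    Set (Fin n → ℝ) :=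
  {a | (∀ i, 0 ≤ a i) ∧ sSup ((fun t => dotp a t) '' F) = -1 ∧
    sSup ((fun t => dotp a t) '' levelL f) = -1}

/-- `Θ_F = {λa : 0 ≤ λ ≤ 1, a ∈ Γ_F}`. -/
def ThetaSet {n : ℕ} (f : (Fin n → ℝ) → ℝ) (F : Set (Fin n → ℝ)) :
    Set (Fin n → ℝ) :=
  {x | ∃ l : ℝ, 0 ≤ l ∧ l ≤ 1 ∧ ∃ a ∈ GammaSet f F, x = l • a}

/-- The gradient image `ω(F, v)` of a set `F` for a function `v` on `ℝ₋ⁿ`. -/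
def gradImage {n : ℕ} (v : (Fin n → ℝ) → ℝ) (F : Set (Fin n → ℝ)) :
    Set (Fin n → ℝ) :=
  ⋃ t0 ∈ F, {a | ∀ t ∈ negOrth n, v t0 + dotp a (t - t0) ≤ v t}

theorem ConvexOn.exists_subgradient {E : Type*} [NormedAddCommGroup E] [NormedSpace ℝ E]
    [FiniteDimensional ℝ E] {s : Set E} {f : E → ℝ} (hs : IsOpen s) (hf : ConvexOn ℝ s f)
    {x : E} (hx : x ∈ s) : ∃ φ : StrongDual ℝ E, ∀ y ∈ s, f x + φ (y - x) ≤ f y := by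
  set S : Set (E × ℝ) := {p | p.1 ∈ s ∧ f p.1 < p.2}
  have hS_open : IsOpen S := by
    have hS : S = Prod.fst ⁻¹' s ∩ (fun p : E × ℝ => f p.1 - p.2) ⁻¹' Iio 0 := by
      ext p; simp [S, sub_neg]
    rw [hS]
    refine ContinuousOn.isOpen_inter_preimage ?_ (hs.preimage continuous_fst) isOpen_Iio
    exact ((hf.continuousOn hs).comp continuousOn_fst fun p hp => hp).sub continuousOn_snd
  obtain ⟨l, hl⟩ := geometric_hahn_banach_open_point hf.convex_strict_epigraph hS_open
    (by simp [S] : (x, f x) ∉ S)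
  set β := l (0, 1)
  have hl_apply (y : E) (r : ℝ) : l (y, r) = l (y, 0) + r * β := by
    rw [show (y, r) = (y, 0) + r • ((0 : E), (1 : ℝ)) by simp, map_add, map_smul, smul_eq_mul]
  have hl_lt (y : E) (hy : y ∈ s) (ε : ℝ) (hε : 0 < ε) :
      l (y, 0) + (f y + ε) * β < l (x, 0) + f x * β := by
    simpa only [← hl_apply] using hl (y, f y + ε) ⟨hy, by linarith⟩
  have hβ : 0 < -β := by linarith [hl_lt x hx 1 one_pos]
  set φ : StrongDual ℝ E := (-β)⁻¹ • l.comp (ContinuousLinearMap.inl ℝ E ℝ)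
  have hφ (y : E) : φ (y - x) = (-β)⁻¹ * (l (y, 0) - l (x, 0)) := by
    rw [← map_sub, Prod.mk_sub_mk, sub_zero]; rfl
  refine ⟨φ, fun y hy => le_of_forall_pos_lt_add fun ε hε => ?_⟩
  have hφ_lt : φ (y - x) < f y + ε - f x := by
    rw [hφ, inv_mul_lt_iff₀ hβ]
    nlinarith [hl_lt y hy ε hε]
  linarith

section dotp

variable {n : ℕ}

lemma dotp_sub (a t s : Fin n → ℝ) : dotp a (t - s) = dotp a t - dotp a s :=
  dotProduct_sub a t s

lemma dotp_smul_left (c : ℝ) (a t : Fin n → ℝ) : dotp (c • a) t = c * dotp a t :=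
  smul_dotProduct c a t

lemma dotp_smul_right (c : ℝ) (a t : Fin n → ℝ) : dotp a (c • t) = c * dotp a t :=
  dotProduct_smul c a t

lemma dotp_single (a : Fin n → ℝ) (i : Fin n) : dotp a (Pi.single i 1) = a i := by
  simp [dotp, Pi.single_apply]

lemma LinearMap.apply_eq_dotp (φ : (Fin n → ℝ) →ₗ[ℝ] ℝ) (t : Fin n → ℝ) :
    φ t = dotp (fun i => φ (Pi.single i 1)) t := by
  conv_lhs => rw [← Finset.univ_sum_single t, map_sum]
  refine Finset.sum_congr rfl fun i _ => ?_
  rw [mul_comm, ← smul_eq_mul, ← map_smul, ← Pi.single_smul', smul_eq_mul, mul_one]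

lemma isOpen_negOrth : IsOpen (negOrth n) := by
  have h : negOrth n = univ.pi fun _ => Iio 0 := by ext t; simp [negOrth]
  rw [h]
  exact isOpen_set_pi finite_univ fun _ _ => isOpen_Iio

lemma smul_mem_negOrth {t : Fin n → ℝ} (ht : t ∈ negOrth n) {c : ℝ} (hc : 0 < c) :
    c • t ∈ negOrth n :=
  fun i => mul_neg_of_pos_of_neg hc (ht i)

lemma dotp_nonpos {a t : Fin n → ℝ} (ha : ∀ i, 0 ≤ a i) (ht : t ∈ negOrth n) : dotp a t ≤ 0 :=
  Finset.sum_nonpos fun i _ => mul_nonpos_of_nonneg_of_nonpos (ha i) (ht i).le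

lemma eq_zero_of_dotp_eq_zero {a t : Fin n → ℝ} (ha : ∀ i, 0 ≤ a i) (ht : t ∈ negOrth n)
    (h : dotp a t = 0) : a = 0 := by
  funext i
  have hterm := (Finset.sum_eq_zero_iff_of_nonpos fun j _ =>
    mul_nonpos_of_nonneg_of_nonpos (ha j) (ht j).le).1 h i (Finset.mem_univ i)
  exact (mul_eq_zero.1 hterm).resolve_right (ht i).ne

end dotp

def IsSubgradient {n : ℕ} (s : Set (Fin n → ℝ)) (v : (Fin n → ℝ) → ℝ) (t0 a : Fin n → ℝ) :
    Prop :=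
  ∀ t ∈ s, v t0 + dotp a (t - t0) ≤ v t

section Subgradient

variable {n : ℕ} {v : (Fin n → ℝ) → ℝ} {t0 a : Fin n → ℝ}

lemma mem_gradImage {F : Set (Fin n → ℝ)} :
    a ∈ gradImage v F ↔ ∃ t0 ∈ F, IsSubgradient (negOrth n) v t0 a := by
  simp [gradImage, IsSubgradient]

lemma ConvexOn.exists_isSubgradient (hv : ConvexOn ℝ (negOrth n) v) (ht0 : t0 ∈ negOrth n) :
    ∃ a, IsSubgradient (negOrth n) v t0 a := by
  obtain ⟨φ, hφ⟩ := hv.exists_subgradient isOpen_negOrth ht0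
  exact ⟨_, fun t ht => (LinearMap.apply_eq_dotp φ.toLinearMap (t - t0)) ▸ hφ t ht⟩

lemma IsSubgradient.nonneg (hv : MonotoneOn v (negOrth n)) (ht0 : t0 ∈ negOrth n)
    (ha : IsSubgradient (negOrth n) v t0 a) (i : Fin n) : 0 ≤ a i := by
  have hsingle : 0 ≤ (Pi.single i 1 : Fin n → ℝ) := Pi.single_nonneg.2 zero_le_one
  have hmem : t0 - Pi.single i 1 ∈ negOrth n := fun j =>
    sub_neg.2 ((ht0 j).trans_le (hsingle j))
  have h := (ha _ hmem).trans (hv hmem ht0 (sub_le_self _ hsingle))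
  have hneg : dotp a (-Pi.single i 1) = -a i := by
    rw [← dotp_single a i]
    exact dotProduct_neg _ _
  rw [sub_sub_cancel_left, hneg] at h
  linarith

lemma IsSubgradient.dotp_eq_of_homogeneous
    (hv : ∀ c : ℝ, 0 < c → ∀ t ∈ negOrth n, v (c • t) = c * v t) (ht0 : t0 ∈ negOrth n)
    (ha : IsSubgradient (negOrth n) v t0 a) : dotp a t0 = v t0 := by
  have h2 := ha _ (smul_mem_negOrth ht0 two_pos)
  have hhalf := ha _ (smul_mem_negOrth ht0 (inv_pos.2 two_pos))
  rw [hv 2 two_pos t0 ht0, show (2 : ℝ) • t0 - t0 = t0 by module] at h2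
  rw [hv _ (inv_pos.2 two_pos) t0 ht0, show (2 : ℝ)⁻¹ • t0 - t0 = (-2⁻¹ : ℝ) • t0 by module,
    dotp_smul_right] at hhalf
  linarith

end Subgradient

section IndicatorProfile

variable {n : ℕ} {f : (Fin n → ℝ) → ℝ} {F : Set (Fin n → ℝ)} {a x t0 : Fin n → ℝ}

lemma IsIndicatorProfile.monotoneOn (hf : IsIndicatorProfile f) : MonotoneOn f (negOrth n) :=
  fun _ hs _ ht hst => hf.2.2.1 _ hs _ ht hst

lemma dotp_le_of_forall_mem_levelL (hf : IsIndicatorProfile f) (ha : ∀ i, 0 ≤ a i)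
    (hL : ∀ t ∈ levelL f, dotp a t ≤ -1) : ∀ t ∈ negOrth n, dotp a t ≤ f t := by
  obtain ⟨-, hnonpos, -, hhom⟩ := hf
  intro t ht
  rcases (hnonpos t ht).eq_or_lt with h0 | hneg
  · rw [h0]
    exact dotp_nonpos ha ht
  · set c := (-f t)⁻¹
    have hc : 0 < c := inv_pos.2 (neg_pos.2 hneg)
    have hcf : c * f t = -1 := by
      rw [inv_mul_eq_iff_eq_mul₀ (neg_ne_zero.2 hneg.ne)]
      ring
    have h := hL (c • t) ⟨smul_mem_negOrth ht hc, (hhom c hc t ht).trans hcf⟩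
    rw [dotp_smul_right, ← hcf] at h
    exact le_of_mul_le_mul_left h hc

lemma isSubgradient_max_smul (hle : ∀ t ∈ negOrth n, dotp a t ≤ f t) (hft0 : f t0 = -1)
    (hat0 : dotp a t0 = -1) {l : ℝ} (hl0 : 0 ≤ l) (hl1 : l ≤ 1) :
    IsSubgradient (negOrth n) (fun t => max (f t) (-1)) t0 (l • a) := by
  intro t ht
  simp only [hft0, max_self, dotp_smul_left, dotp_sub, hat0]
  rcases le_total (dotp a t) (-1) with h | h
  · exact le_max_of_le_right (by nlinarith)
  · exact le_max_of_le_left (by nlinarith [hle t ht])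

lemma mem_gammaSet (hFL : F ⊆ levelL f) (ha : ∀ i, 0 ≤ a i) (ht0 : t0 ∈ F)
    (hat0 : dotp a t0 = -1) (hL : ∀ t ∈ levelL f, dotp a t ≤ -1) : a ∈ GammaSet f F :=
  ⟨ha, IsGreatest.csSup_eq ⟨⟨t0, ht0, hat0⟩, forall_mem_image.2 fun t ht => hL t (hFL ht)⟩,
    IsGreatest.csSup_eq ⟨⟨t0, hFL ht0, hat0⟩, forall_mem_image.2 hL⟩⟩

lemma dotp_le_neg_one_of_mem_gammaSet (ha : a ∈ GammaSet f F) :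
    ∀ t ∈ levelL f, dotp a t ≤ -1 := by
  intro t ht
  have hbdd : BddAbove ((fun t => dotp a t) '' levelL f) := by
    by_contra h
    have := ha.2.2
    rw [Real.sSup_of_not_bddAbove h] at this
    norm_num at this
  exact ha.2.2 ▸ le_csSup hbdd (mem_image_of_mem _ ht)

lemma exists_dotp_eq_neg_one_of_mem_gammaSet (hFc : IsCompact F) (ha : a ∈ GammaSet f F) :
    ∃ t0 ∈ F, dotp a t0 = -1 := by
  have hne : ((fun t => dotp a t) '' F).Nonempty := by
    by_contra h
    have := ha.2.1
    rw [not_nonempty_iff_eq_empty.1 h, Real.sSup_empty] at this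
    norm_num at this
  have hcont : Continuous fun t => dotp a t := by
    unfold dotp
    fun_prop
  simpa [ha.2.1] using (hFc.image hcont).sSup_mem hne

lemma gammaSet_nonempty (hf : IsIndicatorProfile f) (hFL : F ⊆ levelL f) (ht0 : t0 ∈ F) :
    (GammaSet f F).Nonempty := by
  obtain ⟨ht0_neg, hft0⟩ := hFL ht0
  obtain ⟨a, ha⟩ := hf.1.exists_isSubgradient ht0_neg
  have hat0 : dotp a t0 = -1 := (ha.dotp_eq_of_homogeneous hf.2.2.2 ht0_neg).trans hft0
  refine ⟨a, mem_gammaSet hFL (ha.nonneg hf.monotoneOn ht0_neg) ht0 hat0 fun t ht => ?_⟩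
  have h := ha t ht.1
  rw [dotp_sub, hat0, hft0, ht.2] at h
  linarith

lemma mem_thetaSet_of_dotp_le (hFL : F ⊆ levelL f) (ht0 : t0 ∈ F) (hx : ∀ i, 0 ≤ x i)
    (hlow : -1 ≤ dotp x t0) (hneg : dotp x t0 < 0)
    (hL : ∀ t ∈ levelL f, dotp x t ≤ dotp x t0) : x ∈ ThetaSet f F := by
  set l := -dotp x t0 with hl_def
  have hl : 0 < l := neg_pos.2 hneg
  refine ⟨l, hl.le, by linarith, l⁻¹ • x,
    mem_gammaSet hFL (fun i => mul_nonneg (inv_nonneg.2 hl.le) (hx i)) ht0 ?_ fun t ht => ?_,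
    by rw [smul_smul, mul_inv_cancel₀ hl.ne', one_smul]⟩
  · rw [dotp_smul_left, inv_mul_eq_iff_eq_mul₀ hl.ne']
    linarith
  · rw [dotp_smul_left, inv_mul_le_iff₀ hl]
    linarith [hL t ht]

lemma neg_one_le_dotp_of_isSubgradient_max (hf : IsIndicatorProfile f) (ht0 : t0 ∈ levelL f)
    (hx : IsSubgradient (negOrth n) (fun t => max (f t) (-1)) t0 x) : -1 ≤ dotp x t0 := by
  have h := hx _ (smul_mem_negOrth ht0.1 (inv_pos.2 two_pos))
  dsimp only at h
  rw [hf.2.2.2 _ (inv_pos.2 two_pos) t0 ht0.1, ht0.2,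
    show (2 : ℝ)⁻¹ • t0 - t0 = (-2⁻¹ : ℝ) • t0 by module, dotp_smul_right] at h
  norm_num at h
  linarith

lemma dotp_le_of_isSubgradient_max (hft0 : f t0 = -1)
    (hx : IsSubgradient (negOrth n) (fun t => max (f t) (-1)) t0 x) :
    ∀ t ∈ levelL f, dotp x t ≤ dotp x t0 := by
  intro t ht
  have h := hx t ht.1
  simp only [ht.2, hft0, max_self, dotp_sub] at h
  linarith

end IndicatorProfile

theorem theta_eq_gradImage_general (n : ℕ) (f : (Fin n → ℝ) → ℝ)
    (hf : IsIndicatorProfile f) (F : Set (Fin n → ℝ))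
    (hFL : F ⊆ levelL f) (hFc : IsCompact F) :
    ThetaSet f F = gradImage (fun t => max (f t) (-1)) F := by
  ext x
  rw [mem_gradImage]
  constructor
  · rintro ⟨l, hl0, hl1, a, ha, rfl⟩
    obtain ⟨t0, ht0, hat0⟩ := exists_dotp_eq_neg_one_of_mem_gammaSet hFc ha
    have hle := dotp_le_of_forall_mem_levelL hf ha.1 (dotp_le_neg_one_of_mem_gammaSet ha)
    exact ⟨t0, ht0, isSubgradient_max_smul hle (hFL ht0).2 hat0 hl0 hl1⟩
  · rintro ⟨t0, ht0, hx⟩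
    obtain ⟨ht0_neg, hft0⟩ := hFL ht0
    have hx0 := hx.nonneg (hf.monotoneOn.max monotoneOn_const) ht0_neg
    rcases (dotp_nonpos hx0 ht0_neg).lt_or_eq with hneg | hzero
    · exact mem_thetaSet_of_dotp_le hFL ht0 hx0
        (neg_one_le_dotp_of_isSubgradient_max hf (hFL ht0) hx) hneg
        (dotp_le_of_isSubgradient_max hft0 hx)
    · obtain ⟨a, ha⟩ := gammaSet_nonempty hf hFL ht0
      rw [eq_zero_of_dotp_eq_zero hx0 ht0_neg hzero]
      exact ⟨0, le_rfl, zero_le_one, a, ha, (zero_smul ℝ a).symm⟩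

/-- Proposition 2: for a compact subset `F` of `L`, the set `Θ_F` coincides with
the gradient image of `F` for the function `f₋₁ = max(f, −1)`. -/
theorem theta_eq_gradImage (n : ℕ) (hn : 1 ≤ n) (f : (Fin n → ℝ) → ℝ)
    (hf : IsIndicatorProfile f) (F : Set (Fin n → ℝ))
    (hFL : F ⊆ levelL f) (hFc : IsCompact F) :
    ThetaSet f F = gradImage (fun t => max (f t) (-1)) F :=
  theta_eq_gradImage_general n f hf F hFL hFc
end

section
/- Let h : ℝ₋ⁿ → [−∞, ∞) be convex, nondecreasing in each variable, and nonpositive. Assume that for every index k ∈ {1,…,n} and every τ ∈ (−∞, 0), inf{ h(t) : t ∈ ℝ₋ⁿ, t_k = τ } > −∞. Then for every T < 0 there exists a constant A > 0 such that h(t) ≥ A·max_{1≤k≤n} t_k for all t ∈ ℝ₋ⁿ with t_k ≤ T for every k. (This is the convex-analytic form of Lemma 1 of the paper: a nonpositive multicircled plurisubharmonic function v on the unit polydisk corresponds to such an h via h(t) = v(e^{t₁},…,e^{tₙ}), and the hypothesis corresponds to the restriction of v to each coordinate line through 0 not being identically −∞; the conclusion reads v(z) ≥ A·sup_j log|z_j|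 for |z_k| ≤ e^T.) -/
/-!
Fix `T < 0` and let `t ∈ ℝ₋ⁿ` have all coordinates `≤ T`, with largest coordinate `t k`.
Moving the `k`-th coordinate of `t` up to `T` gives a point of the slice `{s_k = T}`, and this
point is the convex combination `λ t + (1 - λ) r` with `λ = T / (2 t_k) ∈ (0, 1/2]` and some
`r ∈ ℝ₋ⁿ`. Since `h ≤ 0`, convexity yields `inf_{s_k = T} h ≤ λ h(t)`, that is
`h(t) ≥ (2 b_k / T) · t_k` for any real lower bound `b_k` of `h` on the slice. Any `A > 0`
dominating the finitely many numbers `2 b_k / T` then works.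
-/

open Set

open Function

lemma Function.update_eq_smul_add_smul {ι 𝕜 : Type*} [DecidableEq ι] [Field 𝕜]
    (t : ι → 𝕜) (k : ι) (τ : 𝕜) {p : 𝕜} (hp : p ≠ 1) :
    update t k τ = p • t + (1 - p) • update t k ((τ - p * t k) / (1 - p)) := by
  have hp' : 1 - p ≠ 0 := sub_ne_zero.mpr hp.symm
  funext i
  rcases eq_or_ne i k with rfl | hi
  · simp only [update_self, Pi.add_apply, Pi.smul_apply, smul_eq_mul]
    field_simp
    ring
  · simp only [update_of_ne hi, Pi.add_apply, Pi.smul_apply, smul_eq_mul]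
    ring

lemma EReal.coe_div_le_of_coe_le_mul {a p : ℝ} (hp : 0 < p) {x : EReal}
    (h : (a : EReal) ≤ p * x) : ((a / p : ℝ) : EReal) ≤ x := by
  induction x using EReal.rec with
  | bot => simp [EReal.mul_bot_of_pos (EReal.coe_pos.mpr hp)] at h
  | coe y =>
    rw [← EReal.coe_mul, EReal.coe_le_coe_iff] at h
    exact EReal.coe_le_coe_iff.mpr ((div_le_iff₀' hp).mpr h)
  | top => exact le_top

lemma update_mem_negOrth {n : ℕ} {t : Fin n → ℝ} (ht : t ∈ negOrth n) (k : Fin n) {x : ℝ}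
    (hx : x < 0) : update t k x ∈ negOrth n := by
  intro i
  rcases eq_or_ne i k with rfl | hi
  · simpa using hx
  · simpa [update_of_ne hi] using ht i

section SliceBound

variable {n : ℕ} {h : (Fin n → ℝ) → EReal}

lemma sInf_slice_le_mul
    (hconv : ∀ s ∈ negOrth n, ∀ t ∈ negOrth n, ∀ p q : ℝ,
      0 ≤ p → 0 ≤ q → p + q = 1 →
        h (p • s + q • t) ≤ (p : EReal) * h s + (q : EReal) * h t)
    (hnonpos : ∀ t ∈ negOrth n, h t ≤ 0)
    {t : Fin n → ℝ} (ht : t ∈ negOrth n) {k : Fin n} {τ : ℝ} (hτ : τ < 0) (htk : t k ≤ τ) :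
    sInf (h '' {s ∈ negOrth n | s k = τ}) ≤ ((τ / (2 * t k) : ℝ) : EReal) * h t := by
  set p := τ / (2 * t k)
  have htk₀ : 2 * t k < 0 := by linarith [ht k]
  have hp₀ : 0 < p := div_pos_of_neg_of_neg hτ htk₀
  have hp₁ : p < 1 := (div_lt_one_of_neg htk₀).mpr (by linarith)
  have hpt : p * t k = τ / 2 := by simp only [p]; field_simp [(ht k).ne]
  set r := update t k ((τ - p * t k) / (1 - p))
  have hr : r ∈ negOrth n :=
    update_mem_negOrth ht k (div_neg_of_neg_of_pos (by linarith) (by linarith))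
  calc sInf (h '' {s ∈ negOrth n | s k = τ})
      ≤ h (update t k τ) := sInf_le ⟨_, ⟨update_mem_negOrth ht k hτ, by simp⟩, rfl⟩
    _ ≤ (p : EReal) * h t + ((1 - p : ℝ) : EReal) * h r := by
      rw [update_eq_smul_add_smul t k τ hp₁.ne]
      exact hconv t ht r hr p (1 - p) hp₀.le (by linarith) (by ring)
    _ ≤ (p : EReal) * h t := add_le_of_nonpos_right <|
      EReal.mul_nonpos_iff.mpr (Or.inl ⟨EReal.coe_nonneg.mpr (by linarith), hnonpos r hr⟩)

lemma mul_le_of_coe_le_sInf_slice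
    (hconv : ∀ s ∈ negOrth n, ∀ t ∈ negOrth n, ∀ p q : ℝ,
      0 ≤ p → 0 ≤ q → p + q = 1 →
        h (p • s + q • t) ≤ (p : EReal) * h s + (q : EReal) * h t)
    (hnonpos : ∀ t ∈ negOrth n, h t ≤ 0)
    {t : Fin n → ℝ} (ht : t ∈ negOrth n) {k : Fin n} {τ : ℝ} (hτ : τ < 0) (htk : t k ≤ τ)
    {b : ℝ} (hb : (b : EReal) ≤ sInf (h '' {s ∈ negOrth n | s k = τ})) :
    ((2 * b / τ * t k : ℝ) : EReal) ≤ h t := by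
  have hp : 0 < τ / (2 * t k) := div_pos_of_neg_of_neg hτ (by linarith [ht k])
  have := EReal.coe_div_le_of_coe_le_mul hp (hb.trans (sInf_slice_le_mul hconv hnonpos ht hτ htk))
  convert this using 2
  field_simp [(ht k).ne]

end SliceBound

theorem lemma1_convex_form_general (n : ℕ) (hn : 1 ≤ n) (h : (Fin n → ℝ) → EReal)
    (hconv : ∀ s ∈ negOrth n, ∀ t ∈ negOrth n, ∀ p q : ℝ,
      0 ≤ p → 0 ≤ q → p + q = 1 →
        h (p • s + q • t) ≤ (p : EReal) * h s + (q : EReal) * h t)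
    (hnonpos : ∀ t ∈ negOrth n, h t ≤ 0)
    (hslice : ∀ k : Fin n, ∀ τ : ℝ, τ < 0 →
        sInf (h '' {t ∈ negOrth n | t k = τ}) ≠ ⊥) :
    ∀ T : ℝ, T < 0 → ∃ A : ℝ, 0 < A ∧
      ∀ t ∈ negOrth n, (∀ k, t k ≤ T) →
        ((A * ⨆ i, t i : ℝ) : EReal) ≤ h t := by
  intro T hT
  have : Nonempty (Fin n) := ⟨⟨0, hn⟩⟩
  set b : Fin n → ℝ := fun k => (sInf (h '' {t ∈ negOrth n | t k = T})).toReal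
  obtain ⟨C, hC⟩ := Finite.bddAbove_range fun k => 2 * b k / T
  refine ⟨max C 1, by positivity, fun t ht htT => ?_⟩
  obtain ⟨k, hk⟩ := exists_eq_ciSup_of_finite (f := t)
  rw [← hk]
  refine le_trans (EReal.coe_le_coe_iff.mpr ?_)
    (mul_le_of_coe_le_sInf_slice hconv hnonpos ht hT (htT k)
      (EReal.coe_toReal_le (hslice k T hT)))
  exact mul_le_mul_of_nonpos_right ((hC ⟨k, rfl⟩).trans (le_max_left C 1)) (ht k).le

/-- Lemma 1 (convex-analytic form): let `h : ℝ₋ⁿ → [−∞,∞)` be convex,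
nondecreasing in each variable and nonpositive, and suppose that for every
coordinate `k` and every `τ < 0` the infimum of `h` over the slice
`{t ∈ ℝ₋ⁿ : t_k = τ}` is finite. Then for every `T < 0` there is `A > 0` with
`h(t) ≥ A · max_k t_k` whenever `t ∈ ℝ₋ⁿ` satisfies `t_k ≤ T` for all `k`. -/
theorem lemma1_convex_form (n : ℕ) (hn : 1 ≤ n) (h : (Fin n → ℝ) → EReal)
    (hconv : ∀ s ∈ negOrth n, ∀ t ∈ negOrth n, ∀ p q : ℝ,
      0 ≤ p → 0 ≤ q → p + q = 1 →
        h (p • s + q • t) ≤ (p : EReal) * h s + (q : EReal) * h t)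
    (hmono : ∀ s ∈ negOrth n, ∀ t ∈ negOrth n, (∀ i, s i ≤ t i) → h s ≤ h t)
    (hnonpos : ∀ t ∈ negOrth n, h t ≤ 0)
    (hslice : ∀ k : Fin n, ∀ τ : ℝ, τ < 0 →
        sInf (h '' {t ∈ negOrth n | t k = τ}) ≠ ⊥) :
    ∀ T : ℝ, T < 0 → ∃ A : ℝ, 0 < A ∧
      ∀ t ∈ negOrth n, (∀ k, t k ≤ T) →
        ((A * ⨆ i, t i : ℝ) : EReal) ≤ h t :=
  lemma1_convex_form_general n hn h hconv hnonpos hslice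
end

section
/- Let Ω ⊆ ℂⁿ be open, x ∈ Ω, m ≥ 1, and C₁, C₂ > 0. Let u, v : Ω → [−∞, ∞), assume u is bounded above on some neighborhood of x, and assume: (i) u(z) − C₁/m ≤ v(z) for all z ∈ Ω; and (ii) v(z) ≤ sup_{ζ ∈ D_ρ(z)} u(ζ) + m^{−1} log( C₂ / (ρ₁⋯ρ_n) ) whenever ρ ∈ (0,∞)ⁿ and the closed polydisk \bar{D}_ρ(z) is contained in Ω. For a ∈ (0,∞)ⁿ and w : Ω → [−∞, ∞) set N(w, a) = limsup_{r → −∞} r^{−1} · sup{ w(z) : |z_k − x_k| ≤ e^{r a_k}, 1 ≤ k ≤ n }. Then for every a ∈ (0,∞)ⁿ: N(v, a) ≤ N(u, a) ≤ N(v, a) + m^{−1}(a₁ + ⋯ + a_n). (This is the Remark following Theorem 2 of the paper: for a plurisubharmonic u and its Demailly approximations u_m, the estimates of Theorem 2 give ν(u_m, x, a) ≤ ν(u, x, a) ≤ ν(u_m, x, a) + m^{−1} Σ_j a_j for the directional Lelong numbers, which are exactly the quantities N(·, a).) -/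
open Set Filter

/-- The open polydisk `D_ρ(z) = {ζ : |ζ_k − z_k| < ρ_k, 1 ≤ k ≤ n}`. -/
def polydisk {n : ℕ} (z : Fin n → ℂ) (ρ : Fin n → ℝ) : Set (Fin n → ℂ) :=
  {ζ | ∀ k, ‖ζ k - z k‖ < ρ k}

/-- The closed polydisk `{ζ : |ζ_k − z_k| ≤ ρ_k, 1 ≤ k ≤ n}`, i.e. the closure
of `D_ρ(z)` for `ρ ∈ (0,∞)ⁿ`. -/
def closedPolydisk {n : ℕ} (z : Fin n → ℂ) (ρ : Fin n → ℝ) : Set (Fin n → ℂ) :=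
  {ζ | ∀ k, ‖ζ k - z k‖ ≤ ρ k}

/-- The directional Lelong-number-type quantity
`N(w, a) = limsup_{r → −∞} r⁻¹ · sup{ w(z) : z ∈ Ω, |z_k − x_k| ≤ e^{r a_k} }`. -/
noncomputable def dirN {n : ℕ} (Ω : Set (Fin n → ℂ)) (x : Fin n → ℂ)
    (w : (Fin n → ℂ) → EReal) (a : Fin n → ℝ) : EReal :=
  limsup (fun r : ℝ =>
    ((r⁻¹ : ℝ) : EReal) *
      sSup (w '' (closedPolydisk x (fun k => Real.exp (r * a k)) ∩ Ω))) atBot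

/-!
Write `S_w(r)` for the supremum of `w` over `Ω` and the closed polydisk of multiradius
`(e^{r a_k})_k` about `x`, so that `N(w, a) = limsup_{r → -∞} r⁻¹ S_w(r)`.
Estimate (i) gives `S_u(r) ≤ S_v(r) + C₁/m`. For (ii), fix `s` with `e^{-s a_k} ≤ 1/2`: for
`z` in the polydisk of multiradius `e^{(r-s)a}` about `x`, the polydisk of the same multiradius
about `z` lies in the one of multiradius `e^{ra}` about `x`, whence
`S_v(r - s) ≤ S_u(r) + m⁻¹ (log C₂ - (r - s) Σ a_k)`.
Both are instances of `g(r - s) ≤ f(r) + α - β r`, and dividing by `r → -∞` turns such a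
bound into `limsup r⁻¹ f ≤ limsup r⁻¹ g + β`: a fixed shift of `r` and an additive constant do
not affect the limit of the quotient.
-/

open Topology

lemma EReal.le_add_coe_of_forall_lt {x y : EReal} {c : ℝ}
    (h : ∀ b : ℝ, y < b → x ≤ ((b + c : ℝ) : EReal)) : x ≤ y + c := by
  rw [← EReal.sub_le_iff_le_add (.inl (EReal.coe_ne_bot c)) (.inl (EReal.coe_ne_top c)),
    ← EReal.le_of_forall_lt_iff_le]
  intro b hb
  rw [EReal.sub_le_iff_le_add (.inl (EReal.coe_ne_bot c)) (.inl (EReal.coe_ne_top c)),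
    ← EReal.coe_add]
  exact h b hb

lemma EReal.coe_mul_le_of_coe_inv_mul_le {t b : ℝ} {y : EReal} (ht : t < 0)
    (h : ((t⁻¹ : ℝ) : EReal) * y ≤ b) : ((t * b : ℝ) : EReal) ≤ y :=
  calc ((t * b : ℝ) : EReal) = b * t := by rw [EReal.coe_mul, mul_comm]
    _ ≤ ((t⁻¹ : ℝ) : EReal) * y * t :=
      EReal.mul_le_mul_of_nonpos_right h (EReal.coe_nonpos.2 ht.le)
    _ = y := by
      rw [mul_comm, ← mul_assoc, ← EReal.coe_mul, mul_inv_cancel₀ ht.ne, EReal.coe_one, one_mul]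

lemma tendsto_inv_mul_affine_atBot (s b α β : ℝ) :
    Tendsto (fun r : ℝ => r⁻¹ * ((r - s) * b - (α - β * r))) atBot (𝓝 (b + β)) := by
  have h := (tendsto_inv_atBot_zero.mul_const (s * b + α)).const_sub (b + β)
  rw [zero_mul, sub_zero] at h
  refine h.congr' ?_
  filter_upwards [eventually_lt_atBot 0] with r hr
  field_simp [hr.ne]
  ring

theorem limsup_inv_mul_le_of_shift {f g : ℝ → EReal} {s α β : ℝ}
    (h : ∀ᶠ r in atBot, g (r - s) ≤ f r + ((α - β * r : ℝ) : EReal)) :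
    limsup (fun r => ((r⁻¹ : ℝ) : EReal) * f r) atBot ≤
      limsup (fun r => ((r⁻¹ : ℝ) : EReal) * g r) atBot + β := by
  refine EReal.le_add_coe_of_forall_lt fun b hb => ?_
  have hshift : Tendsto (fun r : ℝ => r - s) atBot atBot :=
    tendsto_atBot_add_const_right _ (-s) tendsto_id
  have hbound : ∀ᶠ r in atBot, ((r⁻¹ : ℝ) : EReal) * f r ≤
      ((r⁻¹ * ((r - s) * b - (α - β * r)) : ℝ) : EReal) := by
    filter_upwards [h, hshift.eventually (eventually_lt_of_limsup_lt hb),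
      hshift.eventually (eventually_lt_atBot 0), eventually_lt_atBot 0]
      with r hgf hgb hrs hr
    have hf : (((r - s) * b - (α - β * r) : ℝ) : EReal) ≤ f r := by
      rw [EReal.coe_sub, EReal.sub_le_iff_le_add (.inl (EReal.coe_ne_bot _))
        (.inl (EReal.coe_ne_top _))]
      exact (EReal.coe_mul_le_of_coe_inv_mul_le hrs hgb.le).trans hgf
    rw [EReal.coe_mul]
    exact (mul_comm _ _).trans_le <| (EReal.mul_le_mul_of_nonpos_right hf
      (EReal.coe_nonpos.2 (inv_lt_zero.2 hr).le)).trans_eq (mul_comm _ _)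
  exact (limsup_le_limsup hbound).trans_eq
    (EReal.tendsto_coe.2 (tendsto_inv_mul_affine_atBot s b α β)).limsup_eq

section Polydisk

variable {n : ℕ}

lemma polydisk_subset_closedPolydisk (z : Fin n → ℂ) (ρ : Fin n → ℝ) :
    polydisk z ρ ⊆ closedPolydisk z ρ := fun _ hζ k => (hζ k).le

lemma closedPolydisk_subset_closedPolydisk {x z : Fin n → ℂ} {σ ρ τ : Fin n → ℝ}
    (hz : z ∈ closedPolydisk x σ) (h : ∀ k, ρ k + σ k ≤ τ k) :
    closedPolydisk z ρ ⊆ closedPolydisk x τ := fun ζ hζ k =>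
  calc ‖ζ k - x k‖ ≤ ‖ζ k - z k‖ + ‖z k - x k‖ := norm_sub_le_norm_sub_add_norm_sub _ _ _
    _ ≤ τ k := (add_le_add (hζ k) (hz k)).trans (h k)

lemma closedPolydisk_subset_closedBall {x : Fin n → ℂ} {ρ : Fin n → ℝ} {δ : ℝ} (hδ : 0 ≤ δ)
    (h : ∀ k, ρ k ≤ δ) : closedPolydisk x ρ ⊆ Metric.closedBall x δ := fun z hz =>
  (dist_pi_le_iff hδ).2 fun k => by rw [Complex.dist_eq]; exact (hz k).trans (h k)

variable {Ω : Set (Fin n → ℂ)} {x : Fin n → ℂ} {a : Fin n → ℝ}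

lemma eventually_closedPolydisk_subset (hΩ : IsOpen Ω) (hx : x ∈ Ω) (ha : ∀ k, 0 < a k) :
    ∀ᶠ r in atBot, closedPolydisk x (fun k => Real.exp (r * a k)) ⊆ Ω := by
  obtain ⟨δ, hδ, hδΩ⟩ := Metric.nhds_basis_closedBall.mem_iff.1 (hΩ.mem_nhds hx)
  have hsmall : ∀ᶠ r in atBot, ∀ k, Real.exp (r * a k) ≤ δ := eventually_all.2 fun k =>
    (Real.tendsto_exp_atBot.comp (tendsto_id.atBot_mul_const (ha k))).eventually
      (eventually_le_nhds hδ)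
  exact hsmall.mono fun r hr => (closedPolydisk_subset_closedBall hδ.le hr).trans hδΩ

noncomputable def polydiskSup (Ω : Set (Fin n → ℂ)) (x : Fin n → ℂ)
    (w : (Fin n → ℂ) → EReal) (a : Fin n → ℝ) (r : ℝ) : EReal :=
  sSup (w '' (closedPolydisk x (fun k => Real.exp (r * a k)) ∩ Ω))

lemma dirN_eq_limsup_polydiskSup (w : (Fin n → ℂ) → EReal) :
    dirN Ω x w a = limsup (fun r => ((r⁻¹ : ℝ) : EReal) * polydiskSup Ω x w a r) atBot :=
  rfl

variable {u v : (Fin n → ℂ) → EReal}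

lemma polydiskSup_le_add {c : ℝ} (h : ∀ z ∈ Ω, u z ≤ v z + c) (r : ℝ) :
    polydiskSup Ω x u a r ≤ polydiskSup Ω x v a r + c :=
  sSup_le <| forall_mem_image.2 fun z hz =>
    (h z hz.2).trans (add_le_add (le_sSup (mem_image_of_mem v hz)) le_rfl)

lemma polydiskSup_sub_le {m C₂ s r : ℝ} (hC₂ : 0 < C₂)
    (hupp : ∀ z ∈ Ω, ∀ ρ : Fin n → ℝ, (∀ k, 0 < ρ k) → closedPolydisk z ρ ⊆ Ω →
      v z ≤ sSup (u '' polydisk z ρ) + ((m⁻¹ * Real.log (C₂ / ∏ i, ρ i) : ℝ) : EReal))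
    (hs : ∀ k, Real.log 2 ≤ s * a k)
    (hr : closedPolydisk x (fun k => Real.exp (r * a k)) ⊆ Ω) :
    polydiskSup Ω x v a (r - s) ≤
      polydiskSup Ω x u a r + ((m⁻¹ * (Real.log C₂ - (r - s) * ∑ i, a i) : ℝ) : EReal) := by
  refine sSup_le (forall_mem_image.2 fun z hz => ?_)
  have hdouble (k : Fin n) :
      Real.exp ((r - s) * a k) + Real.exp ((r - s) * a k) ≤ Real.exp (r * a k) :=
    calc Real.exp ((r - s) * a k) + Real.exp ((r - s) * a k)
        = Real.exp ((r - s) * a k + Real.log 2) := by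
          rw [Real.exp_add, Real.exp_log two_pos]; ring
      _ ≤ Real.exp (r * a k) := Real.exp_le_exp.2 (by linarith [hs k])
  have hsub := closedPolydisk_subset_closedPolydisk hz.1 hdouble
  have hlog : Real.log (C₂ / ∏ i, Real.exp ((r - s) * a i)) =
      Real.log C₂ - (r - s) * ∑ i, a i := by
    rw [← Real.exp_sum, ← Finset.mul_sum, Real.log_div hC₂.ne' (Real.exp_ne_zero _),
      Real.log_exp]
  calc v z ≤ sSup (u '' polydisk z (fun k => Real.exp ((r - s) * a k))) +
        ((m⁻¹ * Real.log (C₂ / ∏ i, Real.exp ((r - s) * a i)) : ℝ) : EReal) :=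
        hupp z hz.2 _ (fun k => Real.exp_pos _) (hsub.trans hr)
    _ ≤ _ := by
      rw [hlog]
      refine add_le_add (sSup_le_sSup (image_mono fun ζ hζ => ?_)) le_rfl
      exact ⟨hsub (polydisk_subset_closedPolydisk _ _ hζ),
        hr (hsub (polydisk_subset_closedPolydisk _ _ hζ))⟩

end Polydisk

theorem dirN_approx_estimates_general (n : ℕ)
    (Ω : Set (Fin n → ℂ)) (hΩ : IsOpen Ω) (x : Fin n → ℂ) (hx : x ∈ Ω)
    (m : ℝ) (C₁ C₂ : ℝ) (hC₂ : 0 < C₂)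
    (u v : (Fin n → ℂ) → EReal)
    (hlow : ∀ z ∈ Ω, u z - ((C₁ / m : ℝ) : EReal) ≤ v z)
    (hupp : ∀ z ∈ Ω, ∀ ρ : Fin n → ℝ, (∀ k, 0 < ρ k) →
      closedPolydisk z ρ ⊆ Ω →
        v z ≤ sSup (u '' polydisk z ρ) +
          ((m⁻¹ * Real.log (C₂ / ∏ i, ρ i) : ℝ) : EReal)) :
    ∀ a : Fin n → ℝ, (∀ i, 0 < a i) →
      dirN Ω x v a ≤ dirN Ω x u a ∧
      dirN Ω x u a ≤ dirN Ω x v a + ((m⁻¹ * ∑ i, a i : ℝ) : EReal) := by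
  intro a ha
  simp only [dirN_eq_limsup_polydiskSup]
  constructor
  · have hlowS := polydiskSup_le_add (x := x) (a := a) fun z hz =>
      (EReal.sub_le_iff_le_add (.inl (EReal.coe_ne_bot _)) (.inl (EReal.coe_ne_top _))).1
        (hlow z hz)
    have h := limsup_inv_mul_le_of_shift (s := 0) (α := C₁ / m) (β := 0)
      (Eventually.of_forall fun r => by simpa using hlowS r)
    rwa [EReal.coe_zero, add_zero] at h
  · obtain ⟨s, hs⟩ : ∃ s : ℝ, ∀ k, Real.log 2 ≤ s * a k :=
      (eventually_all.2 fun k => (tendsto_id.atTop_mul_const (ha k)).eventually_ge_atTop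
        (Real.log 2)).exists
    refine limsup_inv_mul_le_of_shift (s := s) (α := m⁻¹ * (Real.log C₂ + s * ∑ i, a i)) ?_
    filter_upwards [eventually_closedPolydisk_subset hΩ hx ha] with r hr
    convert polydiskSup_sub_le hC₂ hupp hs hr using 4
    ring

/-- Remark after Theorem 2: if `v` satisfies the two-sided Demailly estimates
with respect to `u` (as the approximations `u_m` do), then the directional
Lelong numbers satisfy `N(v,a) ≤ N(u,a) ≤ N(v,a) + m⁻¹ Σ_j a_j`. -/
theorem dirN_approx_estimates (n : ℕ) (hn : 1 ≤ n)
    (Ω : Set (Fin n → ℂ)) (hΩ : IsOpen Ω) (x : Fin n → ℂ) (hx : x ∈ Ω)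
    (m : ℝ) (hm : 1 ≤ m) (C₁ C₂ : ℝ) (hC₁ : 0 < C₁) (hC₂ : 0 < C₂)
    (u v : (Fin n → ℂ) → EReal)
    (hbdd : ∃ M : ℝ, ∃ V ∈ nhds x, ∀ z ∈ V, u z ≤ (M : EReal))
    (hlow : ∀ z ∈ Ω, u z - ((C₁ / m : ℝ) : EReal) ≤ v z)
    (hupp : ∀ z ∈ Ω, ∀ ρ : Fin n → ℝ, (∀ k, 0 < ρ k) →
      closedPolydisk z ρ ⊆ Ω →
        v z ≤ sSup (u '' polydisk z ρ) +
          ((m⁻¹ * Real.log (C₂ / ∏ i, ρ i) : ℝ) : EReal)) :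
    ∀ a : Fin n → ℝ, (∀ i, 0 < a i) →
      dirN Ω x v a ≤ dirN Ω x u a ∧
      dirN Ω x u a ≤ dirN Ω x v a + ((m⁻¹ * ∑ i, a i : ℝ) : EReal) :=
  dirN_approx_estimates_general n Ω hΩ x hx m C₁ C₂ hC₂ u v hlow hupp
end
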